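/- Let H be a complex Hilbert space and let X₁, …, Xₙ and Y₁, …, Yₙ be strictly positive operators in B(H). Then ∑_{i=1}^n Xᵢ♯Yᵢ ≤ (∑_{i=1}^n Xᵢ) ♯ (∑_{i=1}^n Yᵢ) in the Loewner order (the operator Cauchy–Schwarz inequality for the geometric mean). -/

import Mathlib

/-!
`A ♯ B` is the largest positive `X` for which the operator matrix `[[A, X], [X, B]]` is positive.
Block positivity is additive, and each `Xᵢ ♯ Yᵢ` satisfies it for `Xᵢ, Yᵢ`, so `∑ Xᵢ ♯ Yᵢ` satisfies
it for `∑ Xᵢ, ∑ Yᵢ` and lies below their geometric mean. Maximality: conjugating by `B^{-1/2}`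
turns block positivity into `Y² ≤ B^{-1/2} A B^{-1/2}` for `Y = B^{-1/2} X B^{-1/2}`, and operator
monotonicity of the square root gives `Y ≤ (B^{-1/2} A B^{-1/2})^{1/2}`.
-/

noncomputable section

open MeasureTheory

universe u

section Defs

variable {H : Type*} [NormedAddCommGroup H] [InnerProductSpace ℂ H] [CompleteSpace H]

/-- An operator on a complex Hilbert space is *strictly positive* if it is positive
(in the Loewner order, hence self-adjoint) and invertible. -/
def StrictlyPos (A : H →L[ℂ] H) : Prop := 0 ≤ A ∧ IsUnit A

/-- Real powers of an operator, defined via the continuous functional calculus applied to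
`t ↦ t ^ r`. -/
def opPow (A : H →L[ℂ] H) (r : ℝ) : H →L[ℂ] H := cfc (fun x : ℝ => x ^ r) A

/-- The arithmetic mean `A∇B = (A + B)/2`. -/
def arithMean (A B : H →L[ℂ] H) : H →L[ℂ] H := (2 : ℝ)⁻¹ • (A + B)

/-- The geometric mean `A♯B = B^{1/2} (B^{-1/2} A B^{-1/2})^{1/2} B^{1/2}`. -/
def geomMean (A B : H →L[ℂ] H) : H →L[ℂ] H :=
  opPow B (1/2) * opPow (opPow B (-(1/2)) * A * opPow B (-(1/2))) (1/2) * opPow B (1/2)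

/-- The harmonic mean `A!B = ((A⁻¹ + B⁻¹)/2)⁻¹`. -/
def harmMean (A B : H →L[ℂ] H) : H →L[ℂ] H :=
  Ring.inverse ((2 : ℝ)⁻¹ • (Ring.inverse A + Ring.inverse B))

/-- The perspective `g(A, B) = B^{1/2} f(B^{-1/2} A B^{-1/2}) B^{1/2}` of a function
`f : (0,∞) → (0,∞)`, where `f` acts through the continuous functional calculus. -/
def persp (f : ℝ → ℝ) (A B : H →L[ℂ] H) : H →L[ℂ] H :=
  opPow B (1/2) * cfc f (opPow B (-(1/2)) * A * opPow B (-(1/2))) * opPow B (1/2)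

/-- The (real) inner product `⟨Ax, x⟩`, which is a real number for self-adjoint `A`. -/
def rIP (A : H →L[ℂ] H) (x : H) : ℝ := (inner ℂ (A x) x : ℂ).re

end Defs

/-- A function `f : (0,∞) → (0,∞)` is *operator log-convex* if `f(A∇B) ≤ f(A)♯f(B)` for every
complex Hilbert space `H` and all strictly positive `A, B ∈ B(H)`, where `f` acts via the
continuous functional calculus. -/
def OperatorLogConvex (f : ℝ → ℝ) : Prop :=
  ∀ (H : Type u) [NormedAddCommGroup H] [InnerProductSpace ℂ H] [CompleteSpace H]
    (A B : H →L[ℂ] H), StrictlyPos A → StrictlyPos B →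
      cfc f (arithMean A B) ≤ geomMean (cfc f A) (cfc f B)

/-- The non-commutative `f`-divergence functional
`Θ(Ã, B̃) = ∫_T B_t^{1/2} f(B_t^{-1/2} A_t B_t^{-1/2}) B_t^{1/2} dμ(t)` (a Bochner integral). -/
def Theta (f : ℝ → ℝ) {T : Type*} [MeasurableSpace T] (μ : Measure T)
    {H : Type*} [NormedAddCommGroup H] [InnerProductSpace ℂ H] [CompleteSpace H]
    (A B : T → H →L[ℂ] H) : H →L[ℂ] H :=
  ∫ t, persp f (A t) (B t) ∂μ

open scoped InnerProductSpace
open CFC RCLike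

section PosBlock

variable {H : Type*} [NormedAddCommGroup H] [InnerProductSpace ℂ H]

/-- The operator matrix `[[A, G†], [G, B]]` on `H ⊕ H` is positive. -/
def PosBlock (A G B : H →L[ℂ] H) : Prop :=
  ∀ u v : H, 0 ≤ re ⟪A u, u⟫_ℂ + 2 * re ⟪G u, v⟫_ℂ + re ⟪B v, v⟫_ℂ

lemma PosBlock.sum {ι : Type*} (s : Finset ι) {A G B : ι → H →L[ℂ] H}
    (h : ∀ i ∈ s, PosBlock (A i) (G i) (B i)) :
    PosBlock (∑ i ∈ s, A i) (∑ i ∈ s, G i) (∑ i ∈ s, B i) := by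
  intro u v
  simpa only [sum_apply, sum_inner, map_sum, Finset.mul_sum, ← Finset.sum_add_distrib]
    using Finset.sum_nonneg fun i hi => h i hi u v

variable [CompleteSpace H]

lemma re_inner_star_mul_self_apply (R : H →L[ℂ] H) (u : H) :
    re ⟪(star R * R) u, u⟫_ℂ = ‖R u‖ ^ 2 := by
  rw [mul_apply_eq_comp, ContinuousLinearMap.star_eq_adjoint,
    ContinuousLinearMap.adjoint_inner_left, inner_self_eq_norm_sq]

lemma posBlock_star_mul_self (R : H →L[ℂ] H) : PosBlock (star R * R) R 1 := by
  intro u v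
  rw [re_inner_star_mul_self_apply, one_apply_eq_self, inner_self_eq_norm_sq, ← norm_add_sq]
  positivity

lemma PosBlock.conj {A G B : H →L[ℂ] H} (h : PosBlock A G B) (T S : H →L[ℂ] H) :
    PosBlock (star T * A * T) (star S * G * T) (star S * B * S) := by
  intro u v
  simpa only [mul_apply_eq_comp, ContinuousLinearMap.star_eq_adjoint,
    ContinuousLinearMap.adjoint_inner_left] using h (T u) (S v)

lemma PosBlock.star_mul_self_le {A G : H →L[ℂ] H} (hA : IsSelfAdjoint A)
    (h : PosBlock A G 1) : star G * G ≤ A := by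
  rw [ContinuousLinearMap.le_def, ContinuousLinearMap.isPositive_def']
  refine ⟨hA.sub (.star_mul_self G), fun u => ?_⟩
  have hu := h u (-G u)
  rw [one_apply_eq_self, inner_neg_right, inner_neg_neg, inner_self_eq_norm_sq, map_neg,
    inner_self_eq_norm_sq] at hu
  rw [ContinuousLinearMap.reApplyInnerSelf, sub_apply, inner_sub_left, map_sub,
    re_inner_star_mul_self_apply]
  linarith

end PosBlock

section GeomMean

variable {H : Type*} [NormedAddCommGroup H] [InnerProductSpace ℂ H] [CompleteSpace H]

lemma opPow_eq_rpow {A : H →L[ℂ] H} (hA : 0 ≤ A) (r : ℝ) : opPow A r = A ^ r :=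
  (rpow_eq_cfc_real hA).symm

lemma geomMean_eq_sqrt {A B : H →L[ℂ] H} (hA : 0 ≤ A) (hB : 0 ≤ B) :
    geomMean A B = sqrt B * sqrt (B ^ (-(1 / 2) : ℝ) * A * B ^ (-(1 / 2) : ℝ)) * sqrt B := by
  have hC : 0 ≤ B ^ (-(1 / 2) : ℝ) * A * B ^ (-(1 / 2) : ℝ) :=
    rpow_nonneg.isSelfAdjoint.conjugate_nonneg hA
  simp only [geomMean, opPow_eq_rpow hB, opPow_eq_rpow hC, sqrt_eq_rpow]

lemma geomMean_nonneg {A B : H →L[ℂ] H} (hA : 0 ≤ A) (hB : 0 ≤ B) : 0 ≤ geomMean A B := by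
  rw [geomMean_eq_sqrt hA hB]
  exact conjugate_nonneg_of_nonneg (sqrt_nonneg _) (sqrt_nonneg B)

lemma geomMean_zero_zero : geomMean (0 : H →L[ℂ] H) 0 = 0 := by
  simp [geomMean_eq_sqrt le_rfl le_rfl, CFC.sqrt_zero]

lemma sqrt_mul_conj_rpow_neg_half {B : H →L[ℂ] H} (hB : IsStrictlyPositive B) (Z : H →L[ℂ] H) :
    sqrt B * (B ^ (-(1 / 2) : ℝ) * Z * B ^ (-(1 / 2) : ℝ)) * sqrt B = Z := by
  have hl : sqrt B * B ^ (-(1 / 2) : ℝ) = 1 := by rw [sqrt_eq_rpow, rpow_mul_rpow_neg _ hB]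
  have hr : B ^ (-(1 / 2) : ℝ) * sqrt B = 1 := by rw [sqrt_eq_rpow, rpow_neg_mul_rpow _ hB]
  rw [← mul_assoc, ← mul_assoc, hl, one_mul, mul_assoc, hr, mul_one]

lemma posBlock_geomMean {A B : H →L[ℂ] H} (hA : IsStrictlyPositive A)
    (hB : IsStrictlyPositive B) : PosBlock A (geomMean A B) B := by
  set C := B ^ (-(1 / 2) : ℝ) * A * B ^ (-(1 / 2) : ℝ)
  have hC : 0 ≤ C := rpow_nonneg.isSelfAdjoint.conjugate_nonneg hA.nonneg
  have hA_eq : sqrt B * C * sqrt B = A := sqrt_mul_conj_rpow_neg_half hB A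
  have h := (posBlock_star_mul_self (sqrt C)).conj (sqrt B) (sqrt B)
  rwa [(sqrt_nonneg B).isSelfAdjoint.star_eq, (sqrt_nonneg C).isSelfAdjoint.star_eq,
    sqrt_mul_sqrt_self C hC, mul_one, sqrt_mul_sqrt_self B hB.nonneg, hA_eq,
    ← geomMean_eq_sqrt hA.nonneg hB.nonneg] at h

lemma le_geomMean_of_posBlock {A B X : H →L[ℂ] H} (hA : IsStrictlyPositive A)
    (hB : IsStrictlyPositive B) (hX : 0 ≤ X) (h : PosBlock A X B) : X ≤ geomMean A B := by
  set b := B ^ (-(1 / 2) : ℝ)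
  set C := b * A * b
  set Y := b * X * b
  have hb : IsSelfAdjoint b := rpow_nonneg.isSelfAdjoint
  have hY : 0 ≤ Y := hb.conjugate_nonneg hX
  have hC : IsSelfAdjoint C := (hb.conjugate_nonneg hA.nonneg).isSelfAdjoint
  have hbBb : b * B * b = 1 := conjugate_rpow_neg_one_half B hB
  have hCY : PosBlock C Y 1 := by
    simpa only [hb.star_eq, hbBb] using h.conj b b
  have hYC : Y * Y ≤ C := by
    simpa only [hY.isSelfAdjoint.star_eq] using hCY.star_mul_self_le hC
  have hY_le : Y ≤ sqrt C := sqrt_mul_self Y hY ▸ sqrt_le_sqrt _ _ hYC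
  have hX_eq : sqrt B * Y * sqrt B = X := sqrt_mul_conj_rpow_neg_half hB X
  rw [geomMean_eq_sqrt hA.nonneg hB.nonneg, ← hX_eq]
  exact (sqrt_nonneg B).isSelfAdjoint.conjugate_le_conjugate hY_le

end GeomMean

lemma isStrictlyPositive_sum {A : Type*} [CStarAlgebra A] [PartialOrder A] [StarOrderedRing A]
    {ι : Type*} {s : Finset ι} (hs : s.Nonempty) {X : ι → A}
    (hX : ∀ i ∈ s, IsStrictlyPositive (X i)) : IsStrictlyPositive (∑ i ∈ s, X i) := by
  obtain ⟨j, hj⟩ := hs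
  exact (hX j hj).of_le (Finset.single_le_sum (fun i hi => (hX i hi).nonneg) hj)

theorem stmt_8 {H : Type*} [NormedAddCommGroup H] [InnerProductSpace ℂ H] [CompleteSpace H]
    (n : ℕ) (X Y : Fin n → H →L[ℂ] H)
    (hX : ∀ i, StrictlyPos (X i)) (hY : ∀ i, StrictlyPos (Y i)) :
    ∑ i, geomMean (X i) (Y i) ≤ geomMean (∑ i, X i) (∑ i, Y i) := by
  rcases n.eq_zero_or_pos with rfl | hn
  · simp [geomMean_zero_zero]
  have hne : (Finset.univ : Finset (Fin n)).Nonempty := Finset.univ_nonempty_iff.mpr ⟨⟨0, hn⟩⟩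
  refine le_geomMean_of_posBlock (isStrictlyPositive_sum hne fun i _ => hX i)
    (isStrictlyPositive_sum hne fun i _ => hY i)
    (Finset.sum_nonneg fun i _ => geomMean_nonneg (hX i).1 (hY i).1) ?_
  exact PosBlock.sum _ fun i _ => posBlock_geomMean (hX i) (hY i)
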